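/- For integers m ≥ 0 and n, k ≥ 1, one has x₀^m ш (x₁^n x₀^k) = Σ_{m₁+m₂=m, m_i ≥ 0} C(m₂+k-1, k-1) · 𝔅_{n+1}^{m₁} x₀^{m₂+k}, an identity of multisets of words, where a binomial coefficient c multiplying a multiset means the multiset repeated c times. -/

import Mathlib

/-- The shuffle product of two words, as a multiset of words. -/
def shuffle {X : Type*} : List X → List X → Multiset (List X)
  | u, [] => {u}
  | [], v => {v}
  | a :: u, b :: v =>
      (shuffle u (b :: v)).map (a :: ·) + (shuffle (a :: u) v).map (b :: ·)
termination_by u v => u.length + v.length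

/-- The two-letter alphabet `X = {x₀, x₁}`. -/
def x0 : Bool := false
def x1 : Bool := true

/-- `𝔅_r^m`: the multiset of all words `x₀^{m₁} x₁ x₀^{m₂} x₁ ⋯ x₁ x₀^{m_r}`
with `m₁ + ⋯ + m_r = m`, `m_i ≥ 0`. -/
def B (r m : ℕ) : Multiset (List Bool) :=
  (Finset.Nat.antidiagonalTuple r m).val.map fun f =>
    List.intercalate [x1] (List.ofFn fun i => List.replicate (f i) x0)

/-- `S w T`: the multiset of all concatenations `u ++ w ++ v` with `u ∈ S`, `v ∈ T`,
counted with multiplicity. -/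
def msConcat {X : Type*} (S : Multiset (List X)) (w : List X) (T : Multiset (List X)) :
    Multiset (List X) :=
  S.bind fun u => T.map fun v => u ++ w ++ v

/-!
Both sides obey the same recursion in `m` and `n`. Splitting a shuffle by its first letter gives
`x₀^{m+1} ш x₁^{n+1}x₀^k = x₀ (x₀^m ш x₁^{n+1}x₀^k) + x₁ (x₀^{m+1} ш x₁^n x₀^k)`, while splitting
the words of `𝔅_{r+1}^{q+1}` by their first letter gives `x₀ 𝔅_{r+1}^q + x₁ 𝔅_r^{q+1}`.
The base cases are `x₀^0 ш w = w` and `x₀^m ш x₀^k = C(m+k, k) x₀^{m+k}`; the latter matches the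
right-hand side by the hockey-stick identity `∑_{m₂ ≤ m} C(m₂+k-1, k-1) = C(m+k, k)`.
-/

open Finset

theorem Multiset.map_finsetSum {α β ι : Type*} (f : α → β) (s : Finset ι) (g : ι → Multiset α) :
    (∑ i ∈ s, g i).map f = ∑ i ∈ s, (g i).map f :=
  map_sum (Multiset.mapAddMonoidHom f) g s

theorem Finset.Nat.antidiagonalTuple_succ_val (k n : ℕ) :
    (antidiagonalTuple (k + 1) n).val =
      (antidiagonal n).val.bind fun p =>
        (antidiagonalTuple k p.2).val.map fun f => (Fin.cons p.1 f : Fin (k + 1) → ℕ) := by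
  change ((List.Nat.antidiagonalTuple (k + 1) n : List (Fin (k + 1) → ℕ)) : Multiset _) =
    ((List.Nat.antidiagonal n : List (ℕ × ℕ)) : Multiset _).bind fun p : ℕ × ℕ =>
      ((List.Nat.antidiagonalTuple k p.2 : List (Fin k → ℕ)) : Multiset _).map
        fun f => (Fin.cons p.1 f : Fin (k + 1) → ℕ)
  simp only [Multiset.map_coe, Multiset.coe_bind]
  rfl

section Shuffle

variable {X : Type*}

theorem shuffle_nil_left (v : List X) : shuffle [] v = {v} := by
  cases v <;> simp [shuffle]

theorem shuffle_nil_right (u : List X) : shuffle u [] = {u} := by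
  cases u <;> simp [shuffle]

theorem shuffle_cons_cons (a b : X) (u v : List X) :
    shuffle (a :: u) (b :: v) =
      (shuffle u (b :: v)).map (a :: ·) + (shuffle (a :: u) v).map (b :: ·) := by
  rw [shuffle]

theorem shuffle_replicate_replicate (a : X) (m n : ℕ) :
    shuffle (List.replicate m a) (List.replicate n a) =
      (m + n).choose m • {List.replicate (m + n) a} := by
  induction m generalizing n with
  | zero => simp [shuffle_nil_left]
  | succ m ihm =>
    induction n with
    | zero => simp [shuffle_nil_right]
    | succ n ihn =>
      have hpascal : (m + (n + 1)).choose m + (m + 1 + n).choose (m + 1) =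
          (m + 1 + (n + 1)).choose (m + 1) := by
        rw [show m + 1 + (n + 1) = m + (n + 1) + 1 by omega, Nat.choose_succ_succ',
          show m + 1 + n = m + (n + 1) by omega]
      rw [List.replicate_succ, List.replicate_succ, shuffle_cons_cons, ← List.replicate_succ,
        ← List.replicate_succ, ihm, ihn, Multiset.map_nsmul, Multiset.map_nsmul,
        Multiset.map_singleton, Multiset.map_singleton, ← List.replicate_succ,
        ← List.replicate_succ, show m + (n + 1) + 1 = m + 1 + (n + 1) by omega,
        show m + 1 + n + 1 = m + 1 + (n + 1) by omega, ← add_nsmul, hpascal]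

end Shuffle

theorem B_succ {r : ℕ} (hr : r ≠ 0) (M : ℕ) :
    B (r + 1) M = ∑ p ∈ antidiagonal M, (B r p.2).map (List.replicate p.1 x0 ++ x1 :: ·) := by
  rw [B, Finset.Nat.antidiagonalTuple_succ_val, Multiset.map_bind, Multiset.bind,
    Finset.sum_eq_multiset_sum]
  congr 1
  refine Multiset.map_congr rfl fun p _ => ?_
  rw [B, Multiset.map_map, Multiset.map_map]
  refine Multiset.map_congr rfl fun f _ => ?_
  simp only [Function.comp_apply, List.ofFn_succ, Fin.cons_zero, Fin.cons_succ]
  rw [List.intercalate_cons_of_ne_nil (by simpa using hr)]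
  simp

theorem B_one (m : ℕ) : B 1 m = {List.replicate m x0} := by
  simp [B, Finset.Nat.antidiagonalTuple_one]

theorem B_succ_zero (n : ℕ) : B (n + 1) 0 = {List.replicate n x1} := by
  induction n with
  | zero => simp [B_one]
  | succ n ih => simp [B_succ, ih, List.replicate_succ]

theorem B_succ_succ {r : ℕ} (hr : r ≠ 0) (q : ℕ) :
    B (r + 1) (q + 1) = (B (r + 1) q).map (x0 :: ·) + (B r (q + 1)).map (x1 :: ·) := by
  rw [B_succ hr, B_succ hr, Finset.Nat.sum_antidiagonal_succ, add_comm, Multiset.map_finsetSum]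
  simp [Multiset.map_map, List.replicate_succ]

theorem Finset.Nat.sum_antidiagonal_choose_snd_add (j m : ℕ) :
    ∑ p ∈ antidiagonal m, (p.2 + j).choose j = (m + j + 1).choose (j + 1) := by
  rw [← Finset.Nat.sum_antidiagonal_swap]
  simp only [Prod.snd_swap]
  rw [Finset.Nat.sum_antidiagonal_eq_sum_range_succ (fun i _ => (i + j).choose j),
    Nat.sum_range_add_choose]

-- The right-hand side of the theorem for `k = j + 1` and `r = n + 1`.
def blockTailSum (r j m : ℕ) : Multiset (List Bool) :=
  ∑ p ∈ antidiagonal m,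
    (p.2 + j).choose j • (B r p.1).map (· ++ List.replicate (p.2 + j + 1) x0)

theorem blockTailSum_zero (n j : ℕ) :
    blockTailSum (n + 1) j 0 = {List.replicate n x1 ++ List.replicate (j + 1) x0} := by
  simp [blockTailSum, B_succ_zero]

theorem blockTailSum_one (j m : ℕ) :
    blockTailSum 1 j m = (m + j + 1).choose (j + 1) • {List.replicate (m + j + 1) x0} := by
  have hword : ∀ p ∈ antidiagonal m,
      List.replicate p.1 x0 ++ List.replicate (p.2 + j + 1) x0 = List.replicate (m + j + 1) x0 := by
    intro p hp
    rw [← List.replicate_add, ← mem_antidiagonal.mp hp]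
    ring_nf
  rw [blockTailSum, ← Finset.Nat.sum_antidiagonal_choose_snd_add, sum_smul]
  refine sum_congr rfl fun p hp => ?_
  rw [B_one, Multiset.map_singleton, hword p hp]

theorem blockTailSum_succ_succ (r j m : ℕ) :
    blockTailSum (r + 2) j (m + 1) =
      (blockTailSum (r + 2) j m).map (x0 :: ·) + (blockTailSum (r + 1) j (m + 1)).map (x1 :: ·) := by
  have hzero : B (r + 2) 0 = (B (r + 1) 0).map (x1 :: ·) := by
    simp [B_succ_zero, List.replicate_succ]
  rw [blockTailSum, blockTailSum, blockTailSum, Finset.Nat.sum_antidiagonal_succ,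
    Finset.Nat.sum_antidiagonal_succ]
  simp only [hzero, B_succ_succ (Nat.succ_ne_zero r), Multiset.map_add, Multiset.map_map,
    Function.comp_def, List.cons_append, smul_add, sum_add_distrib, Multiset.map_finsetSum,
    Multiset.map_nsmul]
  abel

theorem shuffle_eq_blockTailSum (j m n : ℕ) :
    shuffle (List.replicate m x0) (List.replicate n x1 ++ List.replicate (j + 1) x0) =
      blockTailSum (n + 1) j m := by
  induction m generalizing n with
  | zero => rw [List.replicate_zero, shuffle_nil_left, blockTailSum_zero]
  | succ m ihm =>
    induction n with
    | zero =>
      rw [List.replicate_zero, List.nil_append, shuffle_replicate_replicate, Nat.choose_symm_add,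
        blockTailSum_one]
      simp only [← add_assoc]
    | succ n ihn =>
      rw [List.replicate_succ, List.replicate_succ, List.cons_append, shuffle_cons_cons,
        ← List.replicate_succ, ← List.cons_append, ← List.replicate_succ, ihm, ihn,
        blockTailSum_succ_succ]

theorem shuffle_x0_pow_x1_pow_x0_pow_general (m n k : ℕ) (hk : 1 ≤ k) :
    shuffle (List.replicate m x0) (List.replicate n x1 ++ List.replicate k x0) =
      ∑ p ∈ Finset.HasAntidiagonal.antidiagonal m,
        Nat.choose (p.2 + k - 1) (k - 1) •
          (B (n + 1) p.1).map (fun w => w ++ List.replicate (p.2 + k) x0) := by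
  obtain ⟨j, rfl⟩ := Nat.exists_eq_add_of_le' hk
  rw [shuffle_eq_blockTailSum, blockTailSum]
  simp only [Nat.add_sub_cancel, ← add_assoc]

theorem shuffle_x0_pow_x1_pow_x0_pow (m n k : ℕ) (hn : 1 ≤ n) (hk : 1 ≤ k) :
    shuffle (List.replicate m x0) (List.replicate n x1 ++ List.replicate k x0) =
      ∑ p ∈ Finset.HasAntidiagonal.antidiagonal m,
        Nat.choose (p.2 + k - 1) (k - 1) •
          (B (n + 1) p.1).map (fun w => w ++ List.replicate (p.2 + k) x0) :=
  shuffle_x0_pow_x1_pow_x0_pow_general m n k hk
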